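/- Let F be a d-dimensional cellular automaton on a finite nonempty alphabet A, and let F↑ be its canonical lift to dimension d+1, the map on A^{ℤ^{d+1}} (identifying ℤ^{d+1} with ℤ^d × ℤ) defined by F↑(x)(z,k) = F(x(·,k))(z), i.e., F applied separately to each slice x(·,k) : ℤ^d → A. Then F has an equicontinuous point if and only if F↑ has an equicontinuous point. -/

import Mathlib

open Function

/-- Configuration space: `d`-dimensional configurations over alphabet `A`. -/
abbrev Config (d : ℕ) (A : Type*) := (Fin d → ℤ) → A

/-- Sup norm of a lattice point. -/
def normInf {d : ℕ} (i : Fin d → ℤ) : ℕ := Finset.univ.sup fun k => (i k).natAbs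

open Classical in
noncomputable def distC {d : ℕ} {A : Type*} (x y : Config d A) : ℝ :=
  if x = y then 0
  else (2 : ℝ) ^ (-((sInf {n : ℕ | ∃ i, normInf i = n ∧ x i ≠ y i} : ℕ) : ℤ))

/-- The shift by `v`. -/
def shiftCA {d : ℕ} {A : Type*} (v : Fin d → ℤ) (x : Config d A) : Config d A :=
  fun z => x (z + v)

/-- `F` is a cellular automaton: continuous (w.r.t. the Cantor metric) and shift-commuting. -/
def IsCA {d : ℕ} {A : Type*} (F : Config d A → Config d A) : Prop :=
  (∀ x : Config d A, ∀ ε > (0:ℝ), ∃ δ > (0:ℝ), ∀ y, distC x y < δ → distC (F x) (F y) < ε) ∧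
  (∀ (v : Fin d → ℤ) (x : Config d A), F (shiftCA v x) = shiftCA v (F x))

/-- `x` is an equicontinuous point of `F`. -/
def IsEquiPoint {d : ℕ} {A : Type*} (F : Config d A → Config d A) (x : Config d A) : Prop :=
  ∀ ε > (0:ℝ), ∃ δ > (0:ℝ), ∀ y, distC x y < δ → ∀ t : ℕ, distC (F^[t] x) (F^[t] y) < ε

/-- `F` is sensitive to initial conditions. -/
def Sensitive {d : ℕ} {A : Type*} (F : Config d A → Config d A) : Prop :=
  ∃ ε > (0:ℝ), ∀ x : Config d A, ∀ δ > (0:ℝ),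
    ∃ y, ∃ t : ℕ, distC x y < δ ∧ distC (F^[t] x) (F^[t] y) > ε

/-- `ε` is a sensitivity constant for `F`. -/
def IsSensConst {d : ℕ} {A : Type*} (F : Config d A → Config d A) (ε : ℝ) : Prop :=
  ∀ x : Config d A, ∀ δ > (0:ℝ),
    ∃ y, ∃ t : ℕ, distC x y < δ ∧ distC (F^[t] x) (F^[t] y) ≥ ε

/-- Canonical lift of a `d`-dimensional CA to dimension `d+1`:
`F` is applied separately to each slice (last coordinate fixed). -/
def liftCA {d : ℕ} {A : Type*} (F : Config d A → Config d A) :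
    Config (d+1) A → Config (d+1) A :=
  fun x z => F (fun w => x (Fin.snoc w (z (Fin.last d)))) (fun k => z k.castSucc)

/-- The tile set `(T,H,V)` tiles the plane. -/
def TilesPlane {T : Type*} (H V : Set (T × T)) : Prop :=
  ∃ c : ℤ × ℤ → T, ∀ z : ℤ × ℤ, (c z, c (z + (1,0))) ∈ H ∧ (c z, c (z + (0,1))) ∈ V

/-- The tile set `(T,H,V)` admits a valid tiling of the `m × m` square. -/
def TilesSquare {T : Type*} (H V : Set (T × T)) (m : ℕ) : Prop :=
  ∃ c : ℕ → ℕ → T,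
    (∀ i j, i + 1 < m → j < m → (c i j, c (i+1) j) ∈ H) ∧
    (∀ i j, i < m → j + 1 < m → (c i j, c i (j+1)) ∈ V)

/-- Local rules of `d`-dimensional CA with `n+1` states and radius `r`. -/
abbrev LocalRule (d n r : ℕ) := ((Fin d → Fin (2*r+1)) → Fin (n+1)) → Fin (n+1)

/-- Codes of `d`-dimensional cellular automata: number of states, radius, local rule. -/
abbrev CACode (d : ℕ) := Σ n : ℕ, Σ r : ℕ, LocalRule d n r

/-- An upper bound for the number of local rules. -/
abbrev ruleBound (d n r : ℕ) : ℕ := (n+1) ^ ((n+1) ^ ((2*r+1) ^ d))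

/-- Local rules are in bijection with `Fin (ruleBound d n r)`. -/
def ruleEquiv (d n r : ℕ) : LocalRule d n r ≃ Fin (ruleBound d n r) :=
  (Equiv.arrowCongr
      ((Equiv.arrowCongr finFunctionFinEquiv (Equiv.refl (Fin (n+1)))).trans finFunctionFinEquiv)
      (Equiv.refl (Fin (n+1)))).trans finFunctionFinEquiv

theorem primrec_ruleBound (d : ℕ) :
    Primrec fun t : ℕ × ℕ × ℕ => ruleBound d t.1 t.2.1 := by
  have hpow : Primrec₂ (fun a b : ℕ => a ^ b) := Primrec₂.unpaired'.mp Nat.Primrec.pow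
  have h1 : Primrec fun t : ℕ × ℕ × ℕ => t.1 + 1 := Primrec.succ.comp Primrec.fst
  have h2 : Primrec fun t : ℕ × ℕ × ℕ => (2 * t.2.1 + 1) ^ d :=
    hpow.comp (Primrec.succ.comp
      (Primrec.nat_mul.comp (Primrec.const 2) (Primrec.fst.comp Primrec.snd)))
      (Primrec.const d)
  have h3 : Primrec fun t : ℕ × ℕ × ℕ => (t.1 + 1) ^ ((2 * t.2.1 + 1) ^ d) := hpow.comp h1 h2
  exact hpow.comp h1 h3

theorem primrec_valid (d : ℕ) :
    PrimrecPred fun t : ℕ × ℕ × ℕ => t.2.2 < ruleBound d t.1 t.2.1 :=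
  Primrec.nat_lt.comp (Primrec.snd.comp Primrec.snd) (primrec_ruleBound d)

instance validCodePrimcodable (d : ℕ) :
    Primcodable {t : ℕ × ℕ × ℕ // t.2.2 < ruleBound d t.1 t.2.1} :=
  Primcodable.subtype (primrec_valid d)

/-- CA codes, encoded as triples of natural numbers. -/
def codeEquiv (d : ℕ) : CACode d ≃ {t : ℕ × ℕ × ℕ // t.2.2 < ruleBound d t.1 t.2.1} where
  toFun c := ⟨(c.1, c.2.1, (ruleEquiv d c.1 c.2.1 c.2.2).val), (ruleEquiv d c.1 c.2.1 c.2.2).isLt⟩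
  invFun t := ⟨t.1.1, t.1.2.1, (ruleEquiv d t.1.1 t.1.2.1).symm ⟨t.1.2.2, t.2⟩⟩
  left_inv c := by rcases c with ⟨n, r, f⟩; simp
  right_inv t := by rcases t with ⟨⟨n, r, k⟩, h⟩; simp

instance CACodePrimcodable (d : ℕ) : Primcodable (CACode d) :=
  Primcodable.ofEquiv _ (codeEquiv d)

/-- The global CA induced by a code. -/
def codeCA (d : ℕ) (c : CACode d) :
    Config d (Fin (c.1 + 1)) → Config d (Fin (c.1 + 1)) :=
  fun x z => c.2.2 (fun u => x (fun k => z k + ((u k : ℕ) : ℤ) - ((c.2.1 : ℕ) : ℤ)))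

/-!
Equicontinuity is a statement about agreement on balls, and the ball of radius `n` in `ℤ^(d+1)`
is the union of the balls of radius `n` in the slices at heights `|k| ≤ n`, on each of which
`F↑` acts as `F`. Hence the configuration that is constant along the last coordinate and equal
to an equicontinuous point of `F` on every slice is an equicontinuous point of `F↑`. Conversely,
every slice of an equicontinuous point `y` of `F↑` is an equicontinuous point of `F`: a
perturbation of one slice is a perturbation of `y` that leaves all other slices alone.
-/

section Lift

variable {d : ℕ} {A : Type*}

def EqOnBall (x y : Config d A) (n : ℕ) : Prop :=
  ∀ i, normInf i ≤ n → x i = y i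

theorem EqOnBall.mono {x y : Config d A} {n n' : ℕ} (h : EqOnBall x y n') (hn : n ≤ n') :
    EqOnBall x y n :=
  fun i hi => h i (hi.trans hn)

theorem distC_lt_two_zpow_iff (x y : Config d A) (n : ℕ) :
    distC x y < (2 : ℝ) ^ (-(n : ℤ)) ↔ EqOnBall x y n := by
  classical
  unfold distC
  split_ifs with hxy
  · subst hxy
    exact iff_of_true (by positivity) fun _ _ => rfl
  set S := {m : ℕ | ∃ i, normInf i = m ∧ x i ≠ y i}
  have hS : S.Nonempty := by
    obtain ⟨i, hi⟩ := Function.ne_iff.mp hxy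
    exact ⟨_, i, rfl, hi⟩
  rw [zpow_lt_zpow_iff_right₀ one_lt_two, neg_lt_neg_iff, Int.ofNat_lt]
  constructor
  · intro hlt i hi
    by_contra hne
    exact (Nat.sInf_le (⟨i, rfl, hne⟩ : normInf i ∈ S)).not_gt (hi.trans_lt hlt)
  · intro hag
    obtain ⟨i, hi, hne⟩ := Nat.sInf_mem hS
    by_contra! hle
    exact hne (hag i (hi ▸ hle))

theorem exists_two_zpow_neg_lt {ε : ℝ} (hε : 0 < ε) : ∃ n : ℕ, (2 : ℝ) ^ (-(n : ℤ)) < ε := by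
  obtain ⟨n, hn⟩ := exists_pow_lt_of_lt_one hε (by norm_num : (2⁻¹ : ℝ) < 1)
  exact ⟨n, by rwa [zpow_neg, zpow_natCast, ← inv_pow]⟩

theorem isEquiPoint_iff_eqOnBall (F : Config d A → Config d A) (x : Config d A) :
    IsEquiPoint F x ↔
      ∀ m, ∃ n, ∀ y, EqOnBall x y n → ∀ t, EqOnBall (F^[t] x) (F^[t] y) m := by
  simp only [← distC_lt_two_zpow_iff]
  constructor
  · intro hx m
    obtain ⟨δ, hδ, hxδ⟩ := hx _ (zpow_pos two_pos (-(m : ℤ)))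
    obtain ⟨n, hn⟩ := exists_two_zpow_neg_lt hδ
    exact ⟨n, fun y hy => hxδ y (hy.trans hn)⟩
  · intro hx ε hε
    obtain ⟨m, hm⟩ := exists_two_zpow_neg_lt hε
    obtain ⟨n, hn⟩ := hx m
    exact ⟨_, zpow_pos two_pos (-(n : ℤ)), fun y hy t => (hn y hy t).trans hm⟩

theorem normInf_init_le (z : Fin (d + 1) → ℤ) : normInf (Fin.init z) ≤ normInf z :=
  Finset.sup_le fun i _ => Finset.le_sup (f := fun k => (z k).natAbs) (Finset.mem_univ i.castSucc)

theorem natAbs_last_le_normInf (z : Fin (d + 1) → ℤ) : (z (Fin.last d)).natAbs ≤ normInf z :=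
  Finset.le_sup (f := fun k => (z k).natAbs) (Finset.mem_univ (Fin.last d))

theorem normInf_snoc_le {w : Fin d → ℤ} {k : ℤ} {n : ℕ} (hw : normInf w ≤ n)
    (hk : k.natAbs ≤ n) : normInf (Fin.snoc w k : Fin (d + 1) → ℤ) ≤ n := by
  refine Finset.sup_le fun j _ => Fin.lastCases ?_ (fun i => ?_) j
  · simpa using hk
  · simpa using (Finset.le_sup (f := fun k => (w k).natAbs) (Finset.mem_univ i)).trans hw

def sliceAt (x : Config (d + 1) A) (k : ℤ) : Config d A := fun w => x (Fin.snoc w k)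

theorem eqOnBall_iff_sliceAt {x y : Config (d + 1) A} {n : ℕ} :
    EqOnBall x y n ↔ ∀ k : ℤ, k.natAbs ≤ n → EqOnBall (sliceAt x k) (sliceAt y k) n := by
  constructor
  · intro h k hk w hw
    exact h _ (normInf_snoc_le hw hk)
  · intro h z hz
    rw [← Fin.snoc_init_self z]
    exact h _ ((natAbs_last_le_normInf z).trans hz) _ ((normInf_init_le z).trans hz)

theorem sliceAt_liftCA (F : Config d A → Config d A) (x : Config (d + 1) A) (k : ℤ) :
    sliceAt (liftCA F x) k = F (sliceAt x k) := by
  funext w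
  simp only [sliceAt, liftCA, Fin.snoc_last, Fin.snoc_castSucc]
  rfl

theorem sliceAt_iterate_liftCA (F : Config d A → Config d A) (x : Config (d + 1) A) (k : ℤ)
    (t : ℕ) : sliceAt ((liftCA F)^[t] x) k = F^[t] (sliceAt x k) := by
  induction t generalizing x with
  | zero => rfl
  | succ t ih => rw [iterate_succ_apply, iterate_succ_apply, ih, sliceAt_liftCA]

theorem sliceAt_comp_init (x : Config d A) (k : ℤ) :
    sliceAt (fun z : Fin (d + 1) → ℤ => x (Fin.init z)) k = x := by
  funext w
  simp [sliceAt, Fin.init_snoc]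

open Classical in
def updateSlice (y : Config (d + 1) A) (k : ℤ) (x : Config d A) : Config (d + 1) A :=
  fun z => if z (Fin.last d) = k then x (Fin.init z) else y z

theorem sliceAt_updateSlice_self (y : Config (d + 1) A) (k : ℤ) (x : Config d A) :
    sliceAt (updateSlice y k x) k = x := by
  funext w
  simp [sliceAt, updateSlice, Fin.init_snoc]

theorem sliceAt_updateSlice_of_ne (y : Config (d + 1) A) {j k : ℤ} (x : Config d A)
    (h : j ≠ k) : sliceAt (updateSlice y k x) j = sliceAt y j := by
  funext w
  simp [sliceAt, updateSlice, h]

theorem IsEquiPoint.liftCA_comp_init {F : Config d A → Config d A} {x : Config d A}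
    (hx : IsEquiPoint F x) : IsEquiPoint (liftCA F) (fun z => x (Fin.init z)) := by
  rw [isEquiPoint_iff_eqOnBall] at hx ⊢
  intro m
  obtain ⟨n, hn⟩ := hx m
  refine ⟨max n m, fun y hy t => eqOnBall_iff_sliceAt.mpr fun k hk => ?_⟩
  have hyk : EqOnBall x (sliceAt y k) n := by
    simpa only [sliceAt_comp_init] using
      (eqOnBall_iff_sliceAt.mp hy k (hk.trans (le_max_right n m))).mono (le_max_left n m)
  simpa only [sliceAt_iterate_liftCA, sliceAt_comp_init] using hn _ hyk t

theorem IsEquiPoint.sliceAt_of_liftCA {F : Config d A → Config d A} {y : Config (d + 1) A}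
    (hy : IsEquiPoint (liftCA F) y) (k : ℤ) : IsEquiPoint F (sliceAt y k) := by
  rw [isEquiPoint_iff_eqOnBall] at hy ⊢
  intro m
  obtain ⟨n, hn⟩ := hy (max k.natAbs m)
  refine ⟨n, fun x hx t => ?_⟩
  have hy' : EqOnBall y (updateSlice y k x) n := by
    refine eqOnBall_iff_sliceAt.mpr fun j _ => ?_
    rcases eq_or_ne j k with rfl | hjk
    · rwa [sliceAt_updateSlice_self]
    · rw [sliceAt_updateSlice_of_ne y x hjk]
      exact fun _ _ => rfl
  have hslice := eqOnBall_iff_sliceAt.mp (hn _ hy' t) k (le_max_left _ _)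
  rw [sliceAt_iterate_liftCA, sliceAt_iterate_liftCA, sliceAt_updateSlice_self] at hslice
  exact hslice.mono (le_max_right _ _)

end Lift

theorem lift_equicontinuous_point_iff_general
    {d : ℕ} (A : Type)
    (F : Config d A → Config d A) :
    (∃ x, IsEquiPoint F x) ↔ (∃ x, IsEquiPoint (liftCA F) x) :=
  ⟨fun ⟨_, hx⟩ => ⟨_, hx.liftCA_comp_init⟩, fun ⟨_, hy⟩ => ⟨_, hy.sliceAt_of_liftCA 0⟩⟩

/-- a `d`-dimensional CA has an equicontinuous point iff its canonical
lift to dimension `d+1` has an equicontinuous point. -/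
theorem lift_equicontinuous_point_iff
    {d : ℕ} (hd : 1 ≤ d) (A : Type) [Fintype A] [Nonempty A]
    (F : Config d A → Config d A) (hF : IsCA F) :
    (∃ x, IsEquiPoint F x) ↔ (∃ x, IsEquiPoint (liftCA F) x) :=
  lift_equicontinuous_point_iff_general A F
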